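/- arXiv:0706.1805 — 2 statements merged into one kernel-verified Lean document; each statement's English description precedes it below -/
import Mathlib

section
/- Let M ⊆ T^d be measurable and let V ⊆ {v ∈ ℝ^d : ‖v‖ = 1} be a compact set of unit vectors each of which generates a relevant direction with respect to M. Then there exist σ > 0 and ε₋ > 0 such that Λ_M(v) ≥ σ·‖v‖ for every v ∈ ℝ^d with v/‖v‖ ∈ V and 0 < ‖v‖ < ε₋. -/
/-!
`Λ_M(a) = |M \ (M + a)|` is continuous in `a`, even, and subadditive, so `Λ_M(n a) ≤ n Λ_M(a)`.
If `Λ_M(κ u) > 0` with `κ ≥ 0`, then for small `t > 0` and `w` near `u` the vector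
`⌈κ/t⌉ t w` is close to `κ u`, hence `Λ_M(t w) ≥ Λ_M(κ u) / (2 ⌈κ/t⌉) ≥ σ t` with
`σ = Λ_M(κ u) / (2 (κ + 1))`. Compactness of `V` makes `σ` and the range of `t` uniform.
-/

open MeasureTheory Real

noncomputable section

instance : Fact (0 < 2 * π) := ⟨Real.two_pi_pos⟩

/-- The `d`-dimensional torus `(ℝ/2πℤ)^d`, equipped with its (product Lebesgue) measure. -/
abbrev Torus (d : ℕ) := Fin d → AddCircle (2 * π)

/-- The translate `M + a` of a subset of the torus by a vector `a ∈ ℝ^d`: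
`x ∈ M + a ↔ x - a ∈ M`. -/
def torusTranslate (d : ℕ) (M : Set (Torus d)) (a : Fin d → ℝ) : Set (Torus d) :=
  (fun x i => x i - ((a i : ℝ) : AddCircle (2 * π))) ⁻¹' M

/-- `Λ_M(a) = |M \ (M + a)|`, the Lebesgue measure of the part of `M` not covered by its
translate. -/
def Lam (d : ℕ) (M : Set (Torus d)) (a : Fin d → ℝ) : ℝ :=
  (volume (M \ torusTranslate d M a)).toReal

/-- The Euclidean norm on `ℝ^d`. -/
def euclNorm (d : ℕ) (v : Fin d → ℝ) : ℝ := Real.sqrt (∑ i, v i ^ 2)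

open Filter Topology Set
open scoped symmDiff

section TranslationDefect

variable {G : Type*} [AddCommGroup G] [MeasurableSpace G] (μ : Measure G)

def translationDefect (M : Set G) (g : G) : ℝ :=
  μ.real (M \ (fun x => x - g) ⁻¹' M)

variable [MeasurableAdd G] [μ.IsAddRightInvariant] [IsFiniteMeasure μ] {M : Set G}

lemma translationDefect_add_le (hM : MeasurableSet M) (g h : G) :
    translationDefect μ M (g + h) ≤ translationDefect μ M g + translationDefect μ M h := by
  have hshift : (fun x => x - h) ⁻¹' M \ (fun x => x - (g + h)) ⁻¹' M
      = (fun x => x - h) ⁻¹' (M \ (fun x => x - g) ⁻¹' M) := by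
    ext x
    simp only [Set.mem_sdiff, mem_preimage, sub_add_eq_sub_sub_swap]
  calc translationDefect μ M (g + h)
      ≤ μ.real ((M \ (fun x => x - h) ⁻¹' M)
          ∪ ((fun x => x - h) ⁻¹' M \ (fun x => x - (g + h)) ⁻¹' M)) := by
        refine measureReal_mono fun x hx => ?_
        by_cases hxh : x - h ∈ M
        · exact Or.inr ⟨hxh, hx.2⟩
        · exact Or.inl ⟨hx.1, hxh⟩
    _ ≤ translationDefect μ M h + translationDefect μ M g := by
        refine (measureReal_union_le _ _).trans_eq ?_
        rw [hshift, (measurePreserving_sub_right μ h).measureReal_preimage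
          (hM.diff ((measurePreserving_sub_right μ g).measurable hM)).nullMeasurableSet]
        rfl
    _ = _ := add_comm _ _

lemma translationDefect_nsmul_le (hM : MeasurableSet M) (g : G) (n : ℕ) :
    translationDefect μ M (n • g) ≤ n * translationDefect μ M g := by
  induction n with
  | zero => simp [translationDefect]
  | succ n ih =>
    calc translationDefect μ M ((n + 1) • g)
        ≤ translationDefect μ M (n • g) + translationDefect μ M g := by
          rw [succ_nsmul]; exact translationDefect_add_le μ hM _ _
      _ ≤ (n + 1 : ℕ) * translationDefect μ M g := by push_cast; linarith

lemma translationDefect_neg (hM : MeasurableSet M) (g : G) :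
    translationDefect μ M (-g) = translationDefect μ M g := by
  have hT : MeasurableSet ((fun x => x - g) ⁻¹' M) :=
    (measurePreserving_sub_right μ g).measurable hM
  have hshift :
      (fun x => x - g) ⁻¹' (M \ (fun x => x - -g) ⁻¹' M) = (fun x => x - g) ⁻¹' M \ M := by
    ext x
    simp
  unfold translationDefect
  rw [← (measurePreserving_sub_right μ g).measureReal_preimage
    (hM.diff ((measurePreserving_sub_right μ (-g)).measurable hM)).nullMeasurableSet, hshift,
    measureReal_def, measureReal_def, measure_sdiff_symm hT.nullMeasurableSet hM.nullMeasurableSet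
    ((measurePreserving_sub_right μ g).measure_preimage hM.nullMeasurableSet) (by finiteness)]

variable [TopologicalSpace G] [IsTopologicalAddGroup G] [BorelSpace G]
  [μ.InnerRegularCompactLTTop]

lemma continuous_translationDefect (hM : MeasurableSet M) :
    Continuous (translationDefect μ M) := by
  have hT : ∀ g : G, MeasurableSet ((fun x => x - g) ⁻¹' M) := fun g =>
    (measurePreserving_sub_right μ g).measurable hM
  have hshift : Continuous fun g : G => (⟨fun x => x - g, by fun_prop⟩ : C(G, G)) :=
    ContinuousMap.continuous_of_continuous_uncurry _ (continuous_snd.sub continuous_fst)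
  refine continuous_iff_continuousAt.2 fun g₀ => ?_
  have hsymm : Tendsto (fun g => μ.real (((fun x => x - g) ⁻¹' M) ∆ ((fun x => x - g₀) ⁻¹' M)))
      (𝓝 g₀) (𝓝 0) := by
    have := tendsto_measure_symmDiff_preimage_nhds_zero (hshift.tendsto g₀)
      (.of_forall fun g => measurePreserving_sub_right μ g) (measurePreserving_sub_right μ g₀)
      hM.nullMeasurableSet (measure_ne_top μ M)
    exact (ENNReal.tendsto_toReal ENNReal.zero_ne_top).comp this
  rw [ContinuousAt, tendsto_iff_dist_tendsto_zero]
  refine squeeze_zero (fun _ => dist_nonneg) (fun g => ?_) hsymm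
  calc dist (translationDefect μ M g) (translationDefect μ M g₀)
      ≤ μ.real ((M \ (fun x => x - g) ⁻¹' M) ∆ (M \ (fun x => x - g₀) ⁻¹' M)) :=
        abs_measureReal_sub_le_measureReal_symmDiff' (hM.diff (hT g)).nullMeasurableSet
          (hM.diff (hT g₀)).nullMeasurableSet (by finiteness) (by finiteness)
    _ ≤ μ.real (((fun x => x - g) ⁻¹' M) ∆ ((fun x => x - g₀) ⁻¹' M)) := by
        refine measureReal_mono fun x hx => ?_
        simp only [Set.mem_symmDiff, Set.mem_sdiff] at hx ⊢
        tauto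

end TranslationDefect

lemma IsCompact.exists_pos_eventually_forall_mul_le {X : Type*} [TopologicalSpace X]
    {K : Set X} (hK : IsCompact K) {F : ℝ → X → ℝ}
    (hF : ∀ u ∈ K, ∃ σ > 0, ∀ᶠ p in 𝓝[>] 0 ×ˢ 𝓝 u, σ * p.1 ≤ F p.1 p.2) :
    ∃ σ > 0, ∀ᶠ t in 𝓝[>] 0, ∀ w ∈ K, σ * t ≤ F t w := by
  refine hK.induction_on (p := fun S => ∃ σ > 0, ∀ᶠ t in 𝓝[>] 0, ∀ w ∈ S, σ * t ≤ F t w)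
    ⟨1, one_pos, by simp⟩ ?_ ?_ ?_
  · rintro S T hST ⟨σ, hσ, hT⟩
    exact ⟨σ, hσ, hT.mono fun t ht w hw => ht w (hST hw)⟩
  · rintro S T ⟨σ, hσ, hS⟩ ⟨τ, hτ, hT⟩
    refine ⟨min σ τ, lt_min hσ hτ, ?_⟩
    filter_upwards [hS, hT, self_mem_nhdsWithin] with t hSt hTt (ht : 0 < t)
    rintro w (hw | hw)
    · exact (mul_le_mul_of_nonneg_right (min_le_left σ τ) ht.le).trans (hSt w hw)
    · exact (mul_le_mul_of_nonneg_right (min_le_right σ τ) ht.le).trans (hTt w hw)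
  · intro u hu
    obtain ⟨σ, hσ, hu⟩ := hF u hu
    obtain ⟨P, hP, Q, hQ, hPQ⟩ := eventually_prod_iff.1 hu
    exact ⟨{w | Q w}, mem_nhdsWithin_of_mem_nhds hQ, σ, hσ,
      hP.mono fun t ht w hw => hPQ ht hw⟩

lemma exists_pos_eventually_mul_le_of_natCast_smul_le {E : Type*} [TopologicalSpace E]
    [AddCommGroup E] [Module ℝ E] [ContinuousSMul ℝ E] {f : E → ℝ} (hf : Continuous f)
    (hsub : ∀ (n : ℕ) (v : E), f ((n : ℝ) • v) ≤ n * f v) {u : E} {κ : ℝ} (hκ : 0 ≤ κ)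
    (hfκ : 0 < f (κ • u)) :
    ∃ σ > 0, ∀ᶠ p in 𝓝[>] 0 ×ˢ 𝓝 u, σ * p.1 ≤ f (p.1 • p.2) := by
  set N : ℝ → ℕ := fun t => ⌈κ * t⁻¹⌉₊
  have hN : Tendsto (fun t => (N t : ℝ) * t) (𝓝[>] 0) (𝓝 κ) := by
    have := (tendsto_nat_ceil_mul_div_atTop hκ).comp tendsto_inv_nhdsGT_zero
    simpa [Function.comp_def, div_inv_eq_mul] using this
  have hNu : Tendsto (fun p : ℝ × E => ((N p.1 : ℝ) * p.1) • p.2) (𝓝[>] 0 ×ˢ 𝓝 u)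
      (𝓝 (κ • u)) :=
    (hN.comp tendsto_fst).smul tendsto_snd
  set c := f (κ • u) / 2
  have hc0 : 0 < c := half_pos hfκ
  refine ⟨c / (κ + 1), by positivity, ?_⟩
  filter_upwards [(hf.tendsto _).comp hNu |>.eventually (lt_mem_nhds (half_lt_self hfκ)),
    (hN.comp tendsto_fst).eventually (gt_mem_nhds (lt_add_one κ)),
    tendsto_fst.eventually self_mem_nhdsWithin] with ⟨t, w⟩ hc hNt (ht : 0 < t)
  have hc' : c < N t * f (t • w) := by
    simp only [Function.comp_apply, mul_smul] at hc
    exact hc.trans_le (hsub _ _)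
  have hf_pos : 0 < f (t • w) := by
    by_contra! h
    nlinarith [mul_nonpos_of_nonneg_of_nonpos (Nat.cast_nonneg (N t) : (0 : ℝ) ≤ N t) h]
  rw [div_mul_eq_mul_div, div_le_iff₀ (by linarith)]
  simp only [Function.comp_apply] at hNt
  nlinarith

def torusProj (d : ℕ) : (Fin d → ℝ) →+ Torus d :=
  (QuotientAddGroup.mk' (AddSubgroup.zmultiples (2 * π))).compLeft (Fin d)

lemma continuous_torusProj (d : ℕ) : Continuous (torusProj d) :=
  continuous_pi fun i => (AddCircle.continuous_mk' _).comp (continuous_apply i)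

lemma Lam_eq_translationDefect (d : ℕ) (M : Set (Torus d)) (a : Fin d → ℝ) :
    Lam d M a = translationDefect volume M (torusProj d a) := rfl

lemma Lam_abs_smul {d : ℕ} {M : Set (Torus d)} (hM : MeasurableSet M) (κ : ℝ) (v : Fin d → ℝ) :
    Lam d M (|κ| • v) = Lam d M (κ • v) := by
  rcases abs_cases κ with ⟨h, -⟩ | ⟨h, -⟩
  · rw [h]
  · rw [h, neg_smul, Lam_eq_translationDefect, map_neg, translationDefect_neg volume hM]
    rfl

lemma Lam_natCast_smul_le {d : ℕ} {M : Set (Torus d)} (hM : MeasurableSet M) (n : ℕ)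
    (v : Fin d → ℝ) :
    Lam d M ((n : ℝ) • v) ≤ n * Lam d M v := by
  rw [Nat.cast_smul_eq_nsmul, Lam_eq_translationDefect, map_nsmul]
  exact translationDefect_nsmul_le volume hM _ n

theorem Lam_uniform_linear_lower_bound_general (d : ℕ) (M : Set (Torus d)) (hM : MeasurableSet M)
    (V : Set (Fin d → ℝ)) (hVcompact : IsCompact V)
    (hVrel : ∀ v ∈ V, ∃ κ : ℝ, Lam d M (κ • v) ≠ 0) :
    ∃ σ : ℝ, 0 < σ ∧ ∃ ε : ℝ, 0 < ε ∧
      ∀ v : Fin d → ℝ, (euclNorm d v)⁻¹ • v ∈ V → 0 < euclNorm d v → euclNorm d v < ε →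
        σ * euclNorm d v ≤ Lam d M v := by
  have hcont : Continuous (Lam d M) :=
    (continuous_translationDefect volume hM).comp (continuous_torusProj d)
  have hlocal : ∀ u ∈ V, ∃ σ > 0, ∀ᶠ p in 𝓝[>] 0 ×ˢ 𝓝 u, σ * p.1 ≤ Lam d M (p.1 • p.2) := by
    intro u hu
    obtain ⟨κ, hκ⟩ := hVrel u hu
    refine exists_pos_eventually_mul_le_of_natCast_smul_le hcont (Lam_natCast_smul_le hM)
      (abs_nonneg κ) ?_
    rw [Lam_abs_smul hM]
    exact measureReal_nonneg.lt_of_ne' hκ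
  obtain ⟨σ, hσ, hsmall⟩ :=
    hVcompact.exists_pos_eventually_forall_mul_le (F := fun t w => Lam d M (t • w)) hlocal
  obtain ⟨ε, hε, hεV⟩ := mem_nhdsGT_iff_exists_Ioo_subset.1 hsmall
  refine ⟨σ, hσ, ε, hε, fun v hv hpos hlt => ?_⟩
  simpa [smul_smul, mul_inv_cancel₀ hpos.ne'] using hεV ⟨hpos, hlt⟩ _ hv

/-- If `V` is a compact set of Euclidean unit vectors in `ℝ^d`, each
generating a relevant direction with respect to a measurable `M ⊆ T^d`, then there exist
`σ > 0` and `ε₋ > 0` such that `Λ_M(v) ≥ σ‖v‖` whenever `v/‖v‖ ∈ V` and `0 < ‖v‖ < ε₋`. -/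
theorem Lam_uniform_linear_lower_bound (d : ℕ) (M : Set (Torus d)) (hM : MeasurableSet M)
    (V : Set (Fin d → ℝ)) (hVcompact : IsCompact V)
    (hVunit : ∀ v ∈ V, euclNorm d v = 1)
    (hVrel : ∀ v ∈ V, ∃ κ : ℝ, Lam d M (κ • v) ≠ 0) :
    ∃ σ : ℝ, 0 < σ ∧ ∃ ε : ℝ, 0 < ε ∧
      ∀ v : Fin d → ℝ, (euclNorm d v)⁻¹ • v ∈ V → 0 < euclNorm d v → euclNorm d v < ε →
        σ * euclNorm d v ≤ Lam d M v :=
  Lam_uniform_linear_lower_bound_general d M hM V hVcompact hVrel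
end
end

section
/- Let M ⊆ T^d be measurable, let 1 ≤ m ≤ d, and suppose each of the standard basis vectors e_1, …, e_m of ℝ^d generates a relevant direction with respect to M. Then there exists a choice of signs s_1, …, s_m ∈ {+1, −1} such that every nonzero vector of the form Σ_{i=1}^m a_i s_i e_i with all a_i ≥ 0 generates a relevant direction with respect to M. -/
open MeasureTheory Real

noncomputable section

/-- The `i`-th standard basis vector of `ℝ^d`. -/
def stdBasis (d : ℕ) (i : Fin d) : Fin d → ℝ := Pi.single i 1

/-! Vectors all of whose multiples translate `M` onto itself up to a null set form a linear
subspace `W`: translation invariance of Lebesgue measure makes `Λ_M` subadditive. Since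
`e_1, …, e_m ∉ W` and a real vector space is not a finite union of proper subspaces, some linear
functional `f` vanishes on `W` but on none of `e_1, …, e_m`. With `s_i` the sign of `f(e_i)`,
`f` is positive on every nonzero vector of the signed cone, which therefore misses `W`. -/

theorem Set.diff_preimage_sub_add_subset {G : Type*} [AddCommGroup G] (s : Set G) (g h : G) :
    s \ (· - (g + h)) ⁻¹' s ⊆ (s \ (· - g) ⁻¹' s) ∪ (· - g) ⁻¹' (s \ (· - h) ⁻¹' s) := by
  rintro x ⟨hx, hxgh⟩
  by_cases hxg : x - g ∈ s
  · exact Or.inr ⟨hxg, by simpa [sub_sub] using hxgh⟩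
  · exact Or.inl ⟨hx, hxg⟩

theorem MeasureTheory.measure_diff_preimage_sub_add_le {G : Type*} [AddCommGroup G]
    [MeasurableSpace G] [MeasurableAdd G] (μ : Measure G) [μ.IsAddRightInvariant]
    (s : Set G) (g h : G) :
    μ (s \ (· - (g + h)) ⁻¹' s) ≤ μ (s \ (· - g) ⁻¹' s) + μ (s \ (· - h) ⁻¹' s) :=
  calc μ (s \ (· - (g + h)) ⁻¹' s)
      ≤ μ ((s \ (· - g) ⁻¹' s) ∪ (· - g) ⁻¹' (s \ (· - h) ⁻¹' s)) :=
        measure_mono (s.diff_preimage_sub_add_subset g h)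
    _ ≤ μ (s \ (· - g) ⁻¹' s) + μ ((· - g) ⁻¹' (s \ (· - h) ⁻¹' s)) := measure_union_le _ _
    _ = μ (s \ (· - g) ⁻¹' s) + μ (s \ (· - h) ⁻¹' s) := by
        simp only [sub_eq_add_neg, measure_preimage_add_right]

theorem Submodule.exists_dual_forall_apply_ne_zero_of_notMem {ι K V : Type*} [Finite ι] [Field K]
    [Infinite K] [AddCommGroup V] [Module K V] (W : Submodule K V) (v : ι → V)
    (hv : ∀ i, v i ∉ W) : ∃ f : Module.Dual K V, W ≤ LinearMap.ker f ∧ ∀ i, f (v i) ≠ 0 := by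
  obtain ⟨g, hg⟩ := Module.exists_dual_forall_apply_ne_zero (K := K) (fun i => W.mkQ (v i))
    (fun i => by simpa using hv i)
  refine ⟨g ∘ₗ W.mkQ, fun w hw => ?_, hg⟩
  simp [(Submodule.Quotient.mk_eq_zero W).mpr hw]

def torusVector (d : ℕ) (a : Fin d → ℝ) : Torus d := fun i => (a i : AddCircle (2 * π))

theorem torusTranslate_eq_preimage (d : ℕ) (M : Set (Torus d)) (a : Fin d → ℝ) :
    torusTranslate d M a = (· - torusVector d a) ⁻¹' M := rfl

theorem torusVector_add (d : ℕ) (a b : Fin d → ℝ) :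
    torusVector d (a + b) = torusVector d a + torusVector d b := by
  ext i; simp [torusVector]

theorem Lam_nonneg (d : ℕ) (M : Set (Torus d)) (a : Fin d → ℝ) : 0 ≤ Lam d M a :=
  ENNReal.toReal_nonneg

theorem Lam_zero (d : ℕ) (M : Set (Torus d)) : Lam d M 0 = 0 := by
  simp [Lam, torusTranslate]

theorem Lam_add_le (d : ℕ) (M : Set (Torus d)) (a b : Fin d → ℝ) :
    Lam d M (a + b) ≤ Lam d M a + Lam d M b := by
  simp only [Lam, torusTranslate_eq_preimage, torusVector_add]
  rw [← ENNReal.toReal_add (measure_ne_top _ _) (measure_ne_top _ _)]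
  exact ENNReal.toReal_mono (by finiteness) (measure_diff_preimage_sub_add_le volume M _ _)

def irrelevantSubmodule (d : ℕ) (M : Set (Torus d)) : Submodule ℝ (Fin d → ℝ) where
  carrier := {a | ∀ κ : ℝ, Lam d M (κ • a) = 0}
  zero_mem' κ := by rw [smul_zero, Lam_zero]
  add_mem' {a b} ha hb κ := by
    refine le_antisymm ?_ (Lam_nonneg d M _)
    calc Lam d M (κ • (a + b)) ≤ Lam d M (κ • a) + Lam d M (κ • b) := by
          rw [smul_add]; exact Lam_add_le d M _ _
      _ = 0 := by rw [ha κ, hb κ, add_zero]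
  smul_mem' c a ha κ := by rw [smul_smul]; exact ha (κ * c)

def signOrOne (x : ℝ) : ℝ := if x < 0 then -1 else 1

theorem signOrOne_eq_one_or_eq_neg_one (x : ℝ) : signOrOne x = 1 ∨ signOrOne x = -1 := by
  unfold signOrOne; split_ifs <;> simp

theorem signOrOne_mul_self (x : ℝ) : signOrOne x * x = |x| := by
  unfold signOrOne; split_ifs with h
  · rw [abs_of_neg h]; ring
  · rw [abs_of_nonneg (not_lt.mp h), one_mul]

theorem Module.Dual.apply_sum_signOrOne_smul_stdBasis_pos {d : ℕ} (f : Module.Dual ℝ (Fin d → ℝ))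
    {a : Fin d → ℝ} (ha : ∀ i, 0 ≤ a i) (hf : ∀ i, a i ≠ 0 → f (stdBasis d i) ≠ 0)
    (ha0 : a ≠ 0) : 0 < f (∑ i, (a i * signOrOne (f (stdBasis d i))) • stdBasis d i) := by
  obtain ⟨j, hj⟩ := Function.ne_iff.mp ha0
  have hsum : f (∑ i, (a i * signOrOne (f (stdBasis d i))) • stdBasis d i)
      = ∑ i, a i * |f (stdBasis d i)| := by
    simp only [map_sum, map_smul, smul_eq_mul, mul_assoc, signOrOne_mul_self]
  rw [hsum]
  exact Finset.sum_pos' (fun i _ => mul_nonneg (ha i) (abs_nonneg _))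
    ⟨j, Finset.mem_univ j, mul_pos ((ha j).lt_of_ne' hj) (abs_pos.mpr (hf j hj))⟩

theorem exists_signs_positive_cone_relevant_general (d m : ℕ) (M : Set (Torus d))
    (hrel : ∀ i : Fin d, (i : ℕ) < m → ∃ κ : ℝ, Lam d M (κ • stdBasis d i) ≠ 0) :
    ∃ s : Fin d → ℝ, (∀ i : Fin d, s i = 1 ∨ s i = -1) ∧
      ∀ a : Fin d → ℝ, (∀ i, 0 ≤ a i) → (∀ i : Fin d, m ≤ (i : ℕ) → a i = 0) →
        (∑ i, (a i * s i) • stdBasis d i) ≠ 0 →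
        ∃ κ : ℝ, Lam d M (κ • ∑ i, (a i * s i) • stdBasis d i) ≠ 0 := by
  obtain ⟨f, hfW, hf⟩ := (irrelevantSubmodule d M).exists_dual_forall_apply_ne_zero_of_notMem
    (fun i : {i : Fin d // (i : ℕ) < m} => stdBasis d i)
    (fun ⟨i, hi⟩ hirr => by obtain ⟨κ, hκ⟩ := hrel i hi; exact hκ (hirr κ))
  refine ⟨fun i => signOrOne (f (stdBasis d i)), fun i => signOrOne_eq_one_or_eq_neg_one _, ?_⟩
  intro a ha hma hne
  have hpos := f.apply_sum_signOrOne_smul_stdBasis_pos ha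
    (fun i hai => hf ⟨i, lt_of_not_ge fun him => hai (hma i him)⟩) (by rintro rfl; simp at hne)
  by_contra! hirr
  exact hpos.ne' (hfW hirr)

/-- If each of the standard basis vectors `e_1, …, e_m` of `ℝ^d`
(`1 ≤ m ≤ d`) generates a relevant direction with respect to a measurable `M ⊆ T^d`,
then there is a choice of signs `s_1, …, s_m ∈ {+1,-1}` such that every nonzero vector
`∑ᵢ aᵢ sᵢ eᵢ` with all `aᵢ ≥ 0` generates a relevant direction. -/
theorem exists_signs_positive_cone_relevant (d m : ℕ) (hm : 1 ≤ m) (hmd : m ≤ d)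
    (M : Set (Torus d)) (hM : MeasurableSet M)
    (hrel : ∀ i : Fin d, (i : ℕ) < m → ∃ κ : ℝ, Lam d M (κ • stdBasis d i) ≠ 0) :
    ∃ s : Fin d → ℝ, (∀ i : Fin d, s i = 1 ∨ s i = -1) ∧
      ∀ a : Fin d → ℝ, (∀ i, 0 ≤ a i) → (∀ i : Fin d, m ≤ (i : ℕ) → a i = 0) →
        (∑ i, (a i * s i) • stdBasis d i) ≠ 0 →
        ∃ κ : ℝ, Lam d M (κ • ∑ i, (a i * s i) • stdBasis d i) ≠ 0 :=
  exists_signs_positive_cone_relevant_general d m M hrel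
end
end
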